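/- arXiv:2211.13645 — 3 statements merged into one kernel-verified Lean document; each statement's English description precedes it below -/
import Mathlib

section
/- For λ > −1, t ∈ ℝ and integer m ≥ 2, the first moment of the generalised higher order Freud weight satisfies μ₀(t;λ,m) = ∫_{−∞}^{∞} |x|^{2λ+1} exp(t x² − x^{2m}) dx = (1/m) Σ_{n=0}^{∞} (tⁿ/n!) Γ((λ+n+1)/m), where the series converges absolutely for every t ∈ ℝ. -/
/-!
By symmetry the integral is twice the one over `(0, ∞)`. There, expand `exp (t x²)` in its
exponential series and integrate term by term: the `n`-th term is the Gamma integral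
`∫₀^∞ x^(2λ+1+2n) exp (-x^(2m)) dx = Γ((λ+n+1)/m) / (2m)`. Dominated convergence justifies
the interchange, since the series of absolute values sums to `x^(2λ+1) exp (|t| x² - x^(2m))`,
which is integrable because `m ≥ 2`. The same identity at `|t|` gives absolute convergence.
-/

open MeasureTheory Real Set Filter

section HalfLineMoments

variable {a : ℝ} {m : ℕ}

lemma mul_sq_le_add_pow_two_mul (s x : ℝ) (hm : 2 ≤ m) :
    s * x ^ 2 ≤ (s ^ 2 + 1) / 2 + x ^ (2 * m) / 2 := by
  have hx4 : (x ^ 2) ^ 2 ≤ 1 + (x ^ 2) ^ m := by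
    rcases le_total (x ^ 2) 1 with hx | hx
    · nlinarith [pow_nonneg (sq_nonneg x) m, sq_nonneg x]
    · linarith [pow_le_pow_right₀ hx hm]
  rw [pow_mul]
  nlinarith [sq_nonneg (s - x ^ 2)]

lemma integral_rpow_mul_exp_neg_pow {b : ℝ} (hb : -1 < b) (hm : 0 < m) :
    ∫ x in Ioi (0 : ℝ), x ^ b * exp (-x ^ (2 * m)) = Gamma ((b + 1) / (2 * m)) / (2 * m) := by
  have := integral_rpow_mul_exp_neg_rpow (p := ((2 * m : ℕ) : ℝ)) (by positivity) hb
  simp only [rpow_natCast] at this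
  rw [this]
  push_cast
  ring

lemma integrableOn_rpow_mul_exp_mul_sq_sub_pow (ha : -1 < a) (hm : 2 ≤ m) (s : ℝ) :
    IntegrableOn (fun x => x ^ a * exp (s * x ^ 2 - x ^ (2 * m))) (Ioi 0) := by
  have hdom := (integrableOn_rpow_mul_exp_neg_mul_rpow (p := ((2 * m : ℕ) : ℝ)) ha
    (by positivity) one_half_pos).const_mul (exp ((s ^ 2 + 1) / 2))
  simp only [rpow_natCast] at hdom
  refine hdom.mono' ?_ ?_
  · exact (ContinuousOn.mul (continuousOn_id.rpow_const fun x hx => Or.inl (ne_of_gt hx))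
      (by fun_prop)).aestronglyMeasurable measurableSet_Ioi
  · refine (ae_restrict_iff' measurableSet_Ioi).mpr (Eventually.of_forall fun x (hx : 0 < x) => ?_)
    have hxa : 0 < x ^ a := rpow_pos_of_pos hx a
    rw [norm_of_nonneg (by positivity), mul_left_comm, ← exp_add]
    gcongr
    linarith [mul_sq_le_add_pow_two_mul s x hm]

lemma hasSum_rpow_mul_exp_mul_sq_sub_pow {x : ℝ} (hx : 0 < x) (s : ℝ) :
    HasSum (fun n : ℕ => s ^ n / n.factorial * (x ^ (a + 2 * n) * exp (-x ^ (2 * m))))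
      (x ^ a * exp (s * x ^ 2 - x ^ (2 * m))) := by
  have hexp := (NormedSpace.expSeries_div_hasSum_exp (s * x ^ 2)).mul_right
    (x ^ a * exp (-x ^ (2 * m)))
  rw [← Real.exp_eq_exp_ℝ, mul_left_comm, ← exp_add, ← sub_eq_add_neg] at hexp
  refine hexp.congr_fun fun n => ?_
  rw [rpow_add hx, rpow_mul_natCast hx.le, rpow_two, mul_pow]
  ring

lemma hasSum_integral_rpow_mul_exp_mul_sq_sub_pow (ha : -1 < a) (hm : 2 ≤ m) (s : ℝ) :
    HasSum (fun n : ℕ => s ^ n / n.factorial * (Gamma ((a + 2 * n + 1) / (2 * m)) / (2 * m)))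
      (∫ x in Ioi 0, x ^ a * exp (s * x ^ 2 - x ^ (2 * m))) := by
  have hseries (r : ℝ) : ∀ᵐ x ∂volume.restrict (Ioi 0),
      HasSum (fun n : ℕ => r ^ n / n.factorial * (x ^ (a + 2 * n) * exp (-x ^ (2 * m))))
        (x ^ a * exp (r * x ^ 2 - x ^ (2 * m))) :=
    (ae_restrict_iff' measurableSet_Ioi).mpr
      (Eventually.of_forall fun x hx => hasSum_rpow_mul_exp_mul_sq_sub_pow hx r)
  refine (hasSum_integral_of_dominated_convergence
      (fun (n : ℕ) x => |s| ^ n / n.factorial * (x ^ (a + 2 * n) * exp (-x ^ (2 * m))))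
      (fun n => by fun_prop) (fun n => ?_) ((hseries |s|).mono fun x hx => hx.summable) ?_
      (hseries s)).congr_fun fun n => ?_
  · refine (ae_restrict_iff' measurableSet_Ioi).mpr (Eventually.of_forall fun x (hx : 0 < x) => ?_)
    rw [norm_mul, norm_div, norm_pow, norm_of_nonneg (by positivity : 0 ≤ x ^ (a + 2 * n) * _),
      RCLike.norm_natCast, Real.norm_eq_abs]
  · exact (integrableOn_rpow_mul_exp_mul_sq_sub_pow ha hm |s|).congr
      ((hseries |s|).mono fun x hx => hx.tsum_eq.symm)
  · have hb : -1 < a + 2 * n := by linarith [n.cast_nonneg (α := ℝ)]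
    rw [integral_const_mul, integral_rpow_mul_exp_neg_pow hb (by omega)]

end HalfLineMoments

/-- For `λ > −1`, `t ∈ ℝ` and integer `m ≥ 2`, the first moment of the
generalised higher order Freud weight `ω(x;t,λ) = |x|^{2λ+1} exp(t x² − x^{2m})` satisfies
`μ₀(t;λ,m) = (1/m) Σ_{n=0}^∞ (tⁿ/n!) Γ((λ+n+1)/m)`, the series converging absolutely for
every `t`. -/
theorem first_moment_series (m : ℕ) (hm : 2 ≤ m) (lam t : ℝ) (hlam : -1 < lam) :
    Summable (fun n : ℕ =>
      |t ^ n / (Nat.factorial n : ℝ) * Real.Gamma ((lam + (n : ℝ) + 1) / (m : ℝ))|) ∧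
    (∫ x : ℝ, |x| ^ (2 * lam + 1) * Real.exp (t * x ^ 2 - x ^ (2 * m))) =
      (1 / (m : ℝ)) *
        ∑' n : ℕ, t ^ n / (Nat.factorial n : ℝ) * Real.Gamma ((lam + (n : ℝ) + 1) / (m : ℝ)) := by
  have hm0 : (0 : ℝ) < m := by positivity
  have hseries (s : ℝ) : HasSum
      (fun n : ℕ => (1 / (2 * m)) * (s ^ n / n.factorial * Gamma ((lam + n + 1) / m)))
      (∫ x in Ioi 0, x ^ (2 * lam + 1) * exp (s * x ^ 2 - x ^ (2 * m))) := by
    refine (hasSum_integral_rpow_mul_exp_mul_sq_sub_pow (by linarith) hm s).congr_fun fun n => ?_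
    rw [show (2 * lam + 1 + 2 * n + 1) / (2 * m) = (lam + n + 1) / m by field_simp; ring]
    ring
  constructor
  · refine ((hseries |t|).summable.mul_left (2 * m : ℝ)).congr fun n => ?_
    have hGamma : 0 < Gamma ((lam + n + 1) / m) :=
      Gamma_pos_of_pos (div_pos (by linarith [n.cast_nonneg (α := ℝ)]) hm0)
    rw [abs_mul, abs_div, abs_pow, Nat.abs_cast, abs_of_pos hGamma]
    field_simp
  · have hsymm : ∫ x : ℝ, |x| ^ (2 * lam + 1) * exp (t * x ^ 2 - x ^ (2 * m)) =
        2 * ∫ x in Ioi 0, x ^ (2 * lam + 1) * exp (t * x ^ 2 - x ^ (2 * m)) := by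
      simp only [← integral_comp_abs
          (f := fun x => x ^ (2 * lam + 1) * exp (t * x ^ 2 - x ^ (2 * m))),
        sq_abs, (even_two_mul m).pow_abs]
    rw [hsymm, ← (hseries t).tsum_eq, tsum_mul_left]
    field_simp
end

section
/- For λ > −1, t ∈ ℝ and integer m ≥ 2, the first moment of the generalised higher order Freud weight admits the finite partition into hypergeometric series: μ₀(t;λ,m) = ∫_{−∞}^{∞} |x|^{2λ+1} exp(t x² − x^{2m}) dx = (1/m) Σ_{j=0}^{m−1} Γ((λ+j+1)/m) (t^j/j!) Σ_{k=0}^{∞} [ ((λ+j+1)/m)_k / ( ((j+1)/m)_k ((j+2)/m)_k ⋯ ((j+m)/m)_k ) ] (t/m)^{mk}, where (a)_k = a(a+1)⋯(a+k−1) is the Pochhammer symbol and each inner series converges absolutely for every t ∈ ℝ. -/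
/-!
Expanding `exp (t x²)` in its Maclaurin series and integrating term by term (the expansion at
`|t|` dominates and sums to the integrable weight at `|t|`) gives
`μ₀(t) = ∑ₙ tⁿ / n! · Γ((λ + 1 + n) / m) / m`. Grouping `n = k m + j` by the residue `j` of `n`
modulo `m`, the identities `Γ(a + k) = Γ(a) (a)ₖ` and Gauss's multiplication formula
`(j + m k)! = j! m^{mk} ∏ᵢ ((j + 1 + i) / m)ₖ` turn the `j`-th subseries into the
hypergeometric series.
-/

open MeasureTheory Real Polynomial
open Set Finset
open scoped Nat

theorem ascPochhammer_eval_eq_prod_range {R : Type*} [CommSemiring R] (a : R) (n : ℕ) :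
    (ascPochhammer R n).eval a = ∏ i ∈ range n, (a + i) := by
  induction n with
  | zero => simp
  | succ n ih => rw [ascPochhammer_succ_eval, ih, prod_range_succ]

/-- Gauss's multiplication formula for the Pochhammer symbol. -/
theorem ascPochhammer_eval_mul_eq_pow_mul_prod {K : Type*} [Field K] {m : ℕ} (hm : (m : K) ≠ 0)
    (a : K) (k : ℕ) :
    (ascPochhammer K (m * k)).eval a =
      (m : K) ^ (m * k) * ∏ i ∈ range m, (ascPochhammer K k).eval ((a + i) / m) := by
  induction k with
  | zero => simp
  | succ k ih =>
    have hblock : ∏ i ∈ range m, (a + ((m * k : ℕ) + i : ℕ)) =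
        (m : K) ^ m * ∏ i ∈ range m, ((a + i) / m + k) := by
      rw [← card_range m, ← prod_const, card_range, ← prod_mul_distrib]
      refine prod_congr rfl fun i _ => ?_
      field_simp
      push_cast
      ring
    simp only [ascPochhammer_eval_eq_prod_range] at ih ⊢
    rw [mul_add, mul_one, prod_range_add, ih, hblock, pow_add]
    simp only [prod_range_succ, prod_mul_distrib]
    ring

theorem Real.Gamma_add_nat_eq_mul_ascPochhammer {a : ℝ} (ha : ∀ n : ℕ, a ≠ -n) (k : ℕ) :
    Gamma (a + k) = Gamma a * (ascPochhammer ℝ k).eval a := by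
  induction k with
  | zero => simp
  | succ k ih =>
    have hak : a + k ≠ 0 := fun h => ha k (by linarith)
    rw [Nat.cast_succ, ← add_assoc, Gamma_add_one hak, ih, ascPochhammer_succ_eval]
    ring

theorem factorial_add_mul_eq_pow_mul_prod {K : Type*} [Field K] [CharZero K] (j : ℕ) {m : ℕ}
    (hm : m ≠ 0) (k : ℕ) :
    ((j + m * k)! : K) =
      j ! * (m : K) ^ (m * k) *
        ∏ i ∈ range m, (ascPochhammer K k).eval (((j : K) + 1 + i) / m) := by
  rw [← factorial_mul_ascPochhammer,
    ascPochhammer_eval_mul_eq_pow_mul_prod (by exact_mod_cast hm),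
    mul_assoc]

theorem integrable_comp_abs_of_integrableOn_Ioi {E : Type*} [NormedAddCommGroup E] {f : ℝ → E}
    (hf : IntegrableOn f (Ioi 0)) : Integrable fun x => f |x| := by
  have hIoi : IntegrableOn (fun x => f |x|) (Ioi 0) :=
    hf.congr_fun (fun x hx => by rw [abs_of_pos hx]) measurableSet_Ioi
  have hIic : IntegrableOn (fun x => f |x|) (Iic 0) := by
    have hneg : MeasurableEmbedding fun x : ℝ => -x := (Homeomorph.neg ℝ).measurableEmbedding
    rw [← Measure.map_neg_eq_self (volume : Measure ℝ), hneg.integrableOn_map_iff]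
    simp_rw [Function.comp_def, abs_neg, neg_preimage, neg_Iic, neg_zero]
    exact (integrableOn_Ici_iff_integrableOn_Ioi).mpr hIoi
  rw [← integrableOn_univ, ← Iic_union_Ioi (a := (0 : ℝ))]
  exact hIic.union hIoi

theorem tsum_eq_sum_range_tsum_mul_add {E : Type*} [NormedAddCommGroup E] [CompleteSpace E]
    {f : ℕ → E} (hf : Summable f) {m : ℕ} (hm : m ≠ 0) :
    ∑' n, f n = ∑ j ∈ range m, ∑' k, f (k * m + j) := by
  have : NeZero m := ⟨hm⟩
  let e : Fin m × ℕ ≃ ℕ := (Equiv.prodComm (Fin m) ℕ).trans (Nat.divModEquiv m).symm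
  have he : Summable fun q => f (e q) := hf.comp_injective e.injective
  rw [← e.tsum_eq f, he.tsum_prod' he.prod_factor, tsum_fintype]
  exact Fin.sum_univ_eq_sum_range (fun j => ∑' k, f (k * m + j)) m

theorem mul_sub_pow_le_of_two_le {m : ℕ} (hm : 2 ≤ m) (c : ℝ) {u : ℝ} (hu : 0 ≤ u) :
    c * u - u ^ m ≤ |c| * (|c| + 1) := by
  have hc : c * u ≤ |c| * u := mul_le_mul_of_nonneg_right (le_abs_self c) hu
  rcases le_or_gt u (|c| + 1) with hsmall | hlarge
  · nlinarith [abs_nonneg c, pow_nonneg hu m]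
  · have hsq : u ^ 2 ≤ u ^ m := pow_le_pow_right₀ (by linarith [abs_nonneg c]) hm
    nlinarith [abs_nonneg c]

noncomputable def freudWeight (m : ℕ) (lam t x : ℝ) : ℝ :=
  |x| ^ (2 * lam + 1) * exp (t * x ^ 2 - x ^ (2 * m))

theorem freudWeight_eq_comp_abs (m : ℕ) (lam t x : ℝ) :
    freudWeight m lam t x = |x| ^ (2 * lam + 1) * exp (t * |x| ^ 2 - |x| ^ (2 * m)) := by
  rw [freudWeight, sq_abs, (even_two_mul m).pow_abs]

theorem integrable_freudWeight {m : ℕ} (hm : 2 ≤ m) {lam : ℝ} (hlam : -1 < lam) (t : ℝ) :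
    Integrable (freudWeight m lam t) := by
  simp_rw [funext (freudWeight_eq_comp_abs m lam t)]
  refine integrable_comp_abs_of_integrableOn_Ioi
    (f := fun u => u ^ (2 * lam + 1) * exp (t * u ^ 2 - u ^ (2 * m))) ?_
  set C := |t + 1| * (|t + 1| + 1)
  have hmajor : IntegrableOn (fun u => exp C * (u ^ (2 * lam + 1) * exp (-1 * u ^ 2))) (Ioi 0) :=
    (integrableOn_rpow_mul_exp_neg_mul_sq one_pos (by linarith)).const_mul _
  refine hmajor.mono' (by fun_prop) ?_
  filter_upwards [ae_restrict_mem measurableSet_Ioi] with u (hu : 0 < u)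
  have hC := mul_sub_pow_le_of_two_le hm (t + 1) (sq_nonneg u)
  rw [← pow_mul] at hC
  rw [norm_of_nonneg (by positivity), mul_left_comm, ← exp_add]
  gcongr
  linarith

theorem hasSum_freudWeight (m : ℕ) (lam t x : ℝ) :
    HasSum (fun n : ℕ => t ^ n / n ! * (x ^ (2 * n) * freudWeight m lam 0 x))
      (freudWeight m lam t x) := by
  have hexp := NormedSpace.expSeries_div_hasSum_exp (t * x ^ 2)
  rw [← Real.exp_eq_exp_ℝ] at hexp
  have hterms : (fun n : ℕ => t ^ n / n ! * (x ^ (2 * n) * freudWeight m lam 0 x)) =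
      fun n => (t * x ^ 2) ^ n / n ! * freudWeight m lam 0 x := by
    ext n
    rw [mul_pow, ← pow_mul]
    ring
  have hsum : freudWeight m lam t x = exp (t * x ^ 2) * freudWeight m lam 0 x := by
    rw [freudWeight, freudWeight, zero_mul, zero_sub, mul_left_comm, ← exp_add,
      ← sub_eq_add_neg]
  rw [hterms, hsum]
  exact hexp.mul_right _

theorem integral_pow_mul_freudWeight_zero {m : ℕ} (hm : m ≠ 0) {lam : ℝ} (hlam : -1 < lam)
    (n : ℕ) :
    ∫ x, x ^ (2 * n) * freudWeight m lam 0 x = Gamma ((lam + 1 + n) / m) / m := by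
  have hm' : (0 : ℝ) < m := by positivity
  have habs : (fun x : ℝ => x ^ (2 * n) * freudWeight m lam 0 x) = fun x =>
      |x| ^ (2 * n) * (|x| ^ (2 * lam + 1) * exp (0 * |x| ^ 2 - |x| ^ (2 * m))) := by
    ext x
    rw [freudWeight_eq_comp_abs, (even_two_mul n).pow_abs]
  rw [habs, integral_comp_abs (f := fun u => u ^ (2 * n) * (u ^ (2 * lam + 1) *
    exp (0 * u ^ 2 - u ^ (2 * m))))]
  have hrpow : ∀ u ∈ Ioi (0 : ℝ),
      u ^ (2 * n) * (u ^ (2 * lam + 1) * exp (0 * u ^ 2 - u ^ (2 * m))) =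
        u ^ (2 * lam + 1 + 2 * n) * exp (-u ^ ((2 * m : ℕ) : ℝ)) := by
    intro u hu
    have h2n : u ^ (2 * n) = u ^ (2 * (n : ℝ)) := by rw [← rpow_natCast]; push_cast; rfl
    rw [rpow_natCast, h2n, add_comm (2 * lam + 1), rpow_add hu (2 * (n : ℝ)), zero_mul, zero_sub,
      mul_assoc]
  have hn : (0 : ℝ) ≤ n := n.cast_nonneg
  rw [setIntegral_congr_fun measurableSet_Ioi hrpow,
    integral_rpow_mul_exp_neg_rpow (by positivity) (by linarith)]
  push_cast
  field_simp
  ring_nf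

noncomputable def freudMomentTerm (m : ℕ) (lam t : ℝ) (n : ℕ) : ℝ :=
  t ^ n / n ! * (Gamma ((lam + 1 + n) / m) / m)

theorem hasSum_freudMomentTerm {m : ℕ} (hm : 2 ≤ m) {lam : ℝ} (hlam : -1 < lam) (t : ℝ) :
    HasSum (freudMomentTerm m lam t) (∫ x, freudWeight m lam t x) := by
  have hterm : ∀ n : ℕ, ∫ x, t ^ n / n ! * (x ^ (2 * n) * freudWeight m lam 0 x) =
      freudMomentTerm m lam t n := fun n => by
    rw [integral_const_mul, integral_pow_mul_freudWeight_zero (by omega) hlam, freudMomentTerm]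
  rw [show freudMomentTerm m lam t = _ from funext fun n => (hterm n).symm]
  refine hasSum_integral_of_dominated_convergence
    (fun n x => |t| ^ n / n ! * (x ^ (2 * n) * freudWeight m lam 0 x))
    (fun n => by unfold freudWeight; fun_prop) (fun n => ?_)
    (ae_of_all _ fun x => (hasSum_freudWeight m lam |t| x).summable) ?_
    (ae_of_all _ (hasSum_freudWeight m lam t))
  · refine ae_of_all _ fun x => le_of_eq ?_
    have : 0 ≤ freudWeight m lam 0 x := by unfold freudWeight; positivity
    rw [norm_mul, norm_div, norm_pow, norm_mul, norm_pow, norm_of_nonneg this, Real.norm_natCast,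
      norm_eq_abs, norm_eq_abs, (even_two_mul n).pow_abs]
  · simp_rw [fun x => (hasSum_freudWeight m lam |t| x).tsum_eq]
    exact integrable_freudWeight hm hlam |t|

theorem abs_freudMomentTerm (m : ℕ) {lam : ℝ} (hlam : -1 < lam) (t : ℝ) (n : ℕ) :
    |freudMomentTerm m lam t n| = freudMomentTerm m lam |t| n := by
  have hGamma : 0 ≤ Gamma ((lam + 1 + n) / m) / m :=
    div_nonneg (Gamma_nonneg_of_nonneg (div_nonneg (by linarith [n.cast_nonneg (α := ℝ)])
      m.cast_nonneg)) m.cast_nonneg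
  rw [freudMomentTerm, freudMomentTerm, abs_mul, abs_div, abs_pow, Nat.abs_cast,
    abs_of_nonneg hGamma]

theorem summable_abs_freudMomentTerm {m : ℕ} (hm : 2 ≤ m) {lam : ℝ} (hlam : -1 < lam)
    (t : ℝ) :
    Summable fun n => |freudMomentTerm m lam t n| := by
  simp_rw [abs_freudMomentTerm m hlam]
  exact (hasSum_freudMomentTerm hm hlam |t|).summable

/-- The `k`-th term of `₂F_m((λ + j + 1) / m, 1; (j + 1) / m, …, (j + m) / m; (t / m)^m)`. -/
noncomputable def freudHypergeometricTerm (m : ℕ) (lam t : ℝ) (j k : ℕ) : ℝ :=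
  (ascPochhammer ℝ k).eval ((lam + j + 1) / m) /
      (∏ i ∈ range m, (ascPochhammer ℝ k).eval (((j : ℝ) + 1 + i) / m)) *
    (t / m) ^ (m * k)

theorem freudMomentTerm_mul_add {m : ℕ} (hm : m ≠ 0) {lam : ℝ} (hlam : -1 < lam) (t : ℝ)
    (j k : ℕ) :
    freudMomentTerm m lam t (k * m + j) =
      Gamma ((lam + j + 1) / m) / m * (t ^ j / j !) * freudHypergeometricTerm m lam t j k := by
  have hm' : (0 : ℝ) < m := by positivity
  have ha : 0 < (lam + j + 1) / m := div_pos (by linarith [j.cast_nonneg (α := ℝ)]) hm'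
  have hGamma : Gamma ((lam + 1 + (k * m + j : ℕ)) / m) =
      Gamma ((lam + j + 1) / m) * (ascPochhammer ℝ k).eval ((lam + j + 1) / m) := by
    rw [← Gamma_add_nat_eq_mul_ascPochhammer]
    · congr 1
      push_cast
      field_simp
      ring
    · intro n hn
      linarith [n.cast_nonneg (α := ℝ)]
  have hprod : 0 < ∏ i ∈ range m, (ascPochhammer ℝ k).eval (((j : ℝ) + 1 + i) / m) :=
    prod_pos fun i _ => ascPochhammer_pos k _ (by positivity)
  rw [freudMomentTerm, freudHypergeometricTerm, hGamma, add_comm (k * m), mul_comm k,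
    factorial_add_mul_eq_pow_mul_prod j hm k, pow_add, div_pow]
  field_simp

theorem summable_abs_freudHypergeometricTerm {m : ℕ} (hm : 2 ≤ m) {lam : ℝ} (hlam : -1 < lam)
    (t : ℝ) (j : ℕ) : Summable fun k => |freudHypergeometricTerm m lam t j k| := by
  have hm0 : m ≠ 0 := by omega
  rcases eq_or_ne t 0 with rfl | ht
  · refine summable_of_ne_finset_zero (s := {0}) fun k hk => ?_
    have hmk : m * k ≠ 0 := mul_ne_zero hm0 (by simpa using hk)
    simp [freudHypergeometricTerm, zero_pow hmk]
  set C := Gamma ((lam + j + 1) / m) / m * (t ^ j / j !)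
  have hC : C ≠ 0 := by
    have ha : 0 < (lam + j + 1) / m :=
      div_pos (by linarith [j.cast_nonneg (α := ℝ)]) (by positivity)
    have := Gamma_pos_of_pos ha
    have := pow_ne_zero j ht
    positivity
  have hinj : Function.Injective fun k => k * m + j := fun k₁ k₂ h =>
    Nat.eq_of_mul_eq_mul_right (Nat.pos_of_ne_zero hm0) (Nat.add_right_cancel h)
  refine ((summable_abs_freudMomentTerm hm hlam t).comp_injective hinj |>.mul_left |C|⁻¹).congr
    fun k => ?_
  rw [Function.comp_apply, freudMomentTerm_mul_add hm0 hlam,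
    abs_mul _ (freudHypergeometricTerm m lam t j k),
    inv_mul_cancel_left₀ (abs_ne_zero.2 hC)]

/-- For `λ > −1`, `t ∈ ℝ` and integer `m ≥ 2`, the first moment of the
generalised higher order Freud weight admits the finite partition into hypergeometric series:
`μ₀(t;λ,m) = (1/m) Σ_{j=0}^{m−1} Γ((λ+j+1)/m) (t^j/j!)
  Σ_{k=0}^∞ ((λ+j+1)/m)_k / (((j+1)/m)_k ⋯ ((j+m)/m)_k) (t/m)^{mk}`,
each inner series converging absolutely for every `t`. -/
theorem first_moment_hypergeometric (m : ℕ) (hm : 2 ≤ m) (lam t : ℝ) (hlam : -1 < lam) :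
    (∀ j < m, Summable (fun k : ℕ =>
      |(ascPochhammer ℝ k).eval ((lam + (j : ℝ) + 1) / (m : ℝ)) /
          (∏ i ∈ Finset.range m,
            (ascPochhammer ℝ k).eval (((j : ℝ) + 1 + (i : ℝ)) / (m : ℝ))) *
        (t / (m : ℝ)) ^ (m * k)|)) ∧
    (∫ x : ℝ, |x| ^ (2 * lam + 1) * Real.exp (t * x ^ 2 - x ^ (2 * m))) =
      (1 / (m : ℝ)) *
        ∑ j ∈ Finset.range m,
          Real.Gamma ((lam + (j : ℝ) + 1) / (m : ℝ)) * (t ^ j / (Nat.factorial j : ℝ)) *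
            ∑' k : ℕ,
              (ascPochhammer ℝ k).eval ((lam + (j : ℝ) + 1) / (m : ℝ)) /
                  (∏ i ∈ Finset.range m,
                    (ascPochhammer ℝ k).eval (((j : ℝ) + 1 + (i : ℝ)) / (m : ℝ))) *
                (t / (m : ℝ)) ^ (m * k) := by
  have hm0 : m ≠ 0 := by omega
  refine ⟨fun j _ => summable_abs_freudHypergeometricTerm hm hlam t j, ?_⟩
  change ∫ x, freudWeight m lam t x = 1 / m * ∑ j ∈ range m,
    Gamma ((lam + j + 1) / m) * (t ^ j / j !) * ∑' k, freudHypergeometricTerm m lam t j k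
  rw [← (hasSum_freudMomentTerm hm hlam t).tsum_eq,
    tsum_eq_sum_range_tsum_mul_add (summable_abs_freudMomentTerm hm hlam t).of_abs hm0, mul_sum]
  refine sum_congr rfl fun j _ => ?_
  simp_rw [freudMomentTerm_mul_add hm0 hlam, tsum_mul_left]
  ring
end

section
/- Let ω₀ be a positive, even weight function on ℝ all of whose moments exist, and for t ∈ ℝ let ω(x;t) = exp(t x²) ω₀(x), assumed to have all moments finite. Let β_n(t) be the recurrence coefficients of the monic polynomials orthogonal with respect to ω(·;t), i.e. P_{n+1}(x) = x P_n(x) − β_n(t) P_{n−1}(x). Then the β_n satisfy the Volterra (Langmuir lattice) equation dβ_n/dt = β_n (β_{n+1} − β_{n−1}) for all n ≥ 1. -/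
/-!
Let `hₙ(t) = ∫ Pₙ² ω(·;t)`, so that `βₙ₊₁ = hₙ₊₁ / hₙ`. When `hₙ` is differentiated in `t`, the
contribution of the `t`-dependence of `Pₙ` vanishes: that variation has degree `< n`, hence is
orthogonal to `Pₙ`. What remains is `∫ x² Pₙ² ω = ‖x Pₙ‖² = hₙ₊₁ + βₙ² hₙ₋₁` by the recurrence, i.e.
`hₙ' / hₙ = βₙ₊₁ + βₙ`, and subtracting the same identity for `n - 1` gives
`(log βₙ)' = βₙ₊₁ - βₙ₋₁`. The coefficients of `Pₙ` are differentiable in `t` by induction on `n`,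
through the recurrence and `βₙ₊₁ = hₙ₊₁ / hₙ`.
-/

open MeasureTheory Real Polynomial

noncomputable section

def expWeight (w0 : ℝ → ℝ) (t x : ℝ) : ℝ := exp (t * x ^ 2) * w0 x

def expWeightMoment (w0 : ℝ → ℝ) (t : ℝ) (k : ℕ) : ℝ := ∫ x, x ^ k * expWeight w0 t x

-- Defined through the moments so that it is linear outright; `integral_eval_mul_expWeight`
-- identifies it with `p ↦ ∫ p(x) ω(x;t) dx`.
def expWeightFunctional (w0 : ℝ → ℝ) (t : ℝ) : ℝ[X] →ₗ[ℝ] ℝ :=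
  lsum fun k => expWeightMoment w0 t k • LinearMap.id

end

def HasCoeffDerivAt {𝕜 : Type*} [NontriviallyNormedField 𝕜] (p : 𝕜 → 𝕜[X]) (p' : 𝕜[X])
    (t : 𝕜) : Prop :=
  ∀ i, HasDerivAt (fun s => (p s).coeff i) (p'.coeff i) t

namespace HasCoeffDerivAt

variable {𝕜 : Type*} [NontriviallyNormedField 𝕜] {p q : 𝕜 → 𝕜[X]} {p' q' : 𝕜[X]} {t : 𝕜}

theorem const (r : 𝕜[X]) (t : 𝕜) : HasCoeffDerivAt (fun _ => r) 0 t := fun i => by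
  simpa using hasDerivAt_const t (r.coeff i)

theorem C {b : 𝕜 → 𝕜} {b' : 𝕜} (hb : HasDerivAt b b' t) :
    HasCoeffDerivAt (fun s => C (b s)) (C b') t := by
  rintro (_ | i)
  · simpa using hb
  · simpa using hasDerivAt_const t (0 : 𝕜)

theorem sub (hp : HasCoeffDerivAt p p' t) (hq : HasCoeffDerivAt q q' t) :
    HasCoeffDerivAt (fun s => p s - q s) (p' - q') t := fun i => by
  simpa only [coeff_sub] using (hp i).fun_sub (hq i)

theorem mul (hp : HasCoeffDerivAt p p' t) (hq : HasCoeffDerivAt q q' t) :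
    HasCoeffDerivAt (fun s => p s * q s) (p' * q t + p t * q') t := fun i => by
  simp only [coeff_mul, coeff_add, ← Finset.sum_add_distrib]
  exact HasDerivAt.fun_sum fun x _ => (hp x.1).mul (hq x.2)

theorem coeff_eq_zero (hp : HasCoeffDerivAt p p' t) {i : ℕ} {c : 𝕜}
    (h : ∀ s, (p s).coeff i = c) : p'.coeff i = 0 :=
  (hp i).unique (by simpa only [h] using hasDerivAt_const t c)

theorem natDegree_le (hp : HasCoeffDerivAt p p' t) {N : ℕ} (h : ∀ s, (p s).natDegree ≤ N) :
    p'.natDegree ≤ N :=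
  natDegree_le_iff_coeff_eq_zero.mpr fun _ hm =>
    hp.coeff_eq_zero fun s => coeff_eq_zero_of_natDegree_lt ((h s).trans_lt hm)

theorem degree_lt_of_monic (hp : HasCoeffDerivAt p p' t) {n : ℕ} (hmonic : ∀ s, (p s).Monic)
    (hdeg : ∀ s, (p s).natDegree = n) : p'.degree < n := by
  refine (degree_lt_iff_coeff_zero _ _).mpr fun m hm => ?_
  rcases hm.eq_or_lt with rfl | hlt
  · exact hp.coeff_eq_zero fun s => by rw [← hdeg s]; exact hmonic s
  · exact hp.coeff_eq_zero fun s => coeff_eq_zero_of_natDegree_lt (by rw [hdeg s]; exact hlt)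

end HasCoeffDerivAt

section ExpWeight

variable {w0 : ℝ → ℝ}

theorem hasDerivAt_expWeightMoment
    (hint : ∀ (t : ℝ) (k : ℕ), Integrable (fun x => x ^ k * expWeight w0 t x)) (t : ℝ) (k : ℕ) :
    HasDerivAt (fun s => expWeightMoment w0 s k) (expWeightMoment w0 t (k + 2)) t := by
  -- on the ball of radius 1 about t, the derivative in s is dominated by the weight at t + 1
  refine (hasDerivAt_integral_of_dominated_loc_of_deriv_le (μ := volume)
    (F := fun s x => x ^ k * expWeight w0 s x) (F' := fun s x => x ^ (k + 2) * expWeight w0 s x)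
    (bound := fun x => |x ^ (k + 2) * expWeight w0 (t + 1) x|) (Metric.ball_mem_nhds t one_pos)
    (.of_forall fun s => (hint s k).aestronglyMeasurable) (hint t k)
    (hint t (k + 2)).aestronglyMeasurable ?_ (hint (t + 1) (k + 2)).abs ?_).2
  · refine .of_forall fun x s hs => ?_
    have hst : s ≤ t + 1 := by linarith [(abs_lt.mp (Metric.mem_ball.mp hs)).2, Real.dist_eq s t]
    simp only [expWeight, norm_mul, Real.norm_eq_abs, abs_mul, abs_exp]
    gcongr
  · refine .of_forall fun x s _ => ?_
    have h := (((hasDerivAt_id s).mul_const (x ^ 2)).exp.mul_const (w0 x)).const_mul (x ^ k)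
    exact h.congr_deriv (by simp only [expWeight, id]; ring)

theorem expWeightFunctional_monomial (t : ℝ) (k : ℕ) (a : ℝ) :
    expWeightFunctional w0 t (monomial k a) = a * expWeightMoment w0 t k := by
  simp [expWeightFunctional, mul_comm]

theorem expWeightFunctional_X_pow_mul {p : ℝ[X]} {N : ℕ} (hp : p.natDegree < N) (t : ℝ) (j : ℕ) :
    expWeightFunctional w0 t (X ^ j * p) =
      ∑ i ∈ Finset.range N, p.coeff i * expWeightMoment w0 t (i + j) := by
  conv_lhs => rw [p.as_sum_range' N hp]
  simp [Finset.mul_sum, X_pow_mul_monomial, expWeightFunctional_monomial]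

theorem expWeightFunctional_eq_sum {p : ℝ[X]} {N : ℕ} (hp : p.natDegree < N) (t : ℝ) :
    expWeightFunctional w0 t p = ∑ i ∈ Finset.range N, p.coeff i * expWeightMoment w0 t i := by
  simpa using expWeightFunctional_X_pow_mul hp t 0

theorem eval_mul_expWeight_eq_sum (p : ℝ[X]) (t : ℝ) :
    (fun x => p.eval x * expWeight w0 t x) =
      fun x => ∑ i ∈ Finset.range (p.natDegree + 1), p.coeff i * (x ^ i * expWeight w0 t x) := by
  funext x
  rw [eval_eq_sum_range, Finset.sum_mul]
  exact Finset.sum_congr rfl fun i _ => by ring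

variable (hint : ∀ (t : ℝ) (k : ℕ), Integrable (fun x => x ^ k * expWeight w0 t x))
include hint

theorem integrable_eval_mul_expWeight (p : ℝ[X]) (t : ℝ) :
    Integrable (fun x => p.eval x * expWeight w0 t x) := by
  rw [eval_mul_expWeight_eq_sum]
  exact integrable_finsetSum _ fun i _ => (hint t i).const_mul _

theorem integral_eval_mul_expWeight (p : ℝ[X]) (t : ℝ) :
    ∫ x, p.eval x * expWeight w0 t x = expWeightFunctional w0 t p := by
  rw [eval_mul_expWeight_eq_sum, integral_finsetSum _ fun i _ => (hint t i).const_mul _,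
    expWeightFunctional_eq_sum (Nat.lt_succ_self _)]
  simp only [integral_const_mul, expWeightMoment]

theorem expWeightFunctional_mul_self_pos (hpos : ∀ x, 0 < w0 x) {q : ℝ[X]} (hq : q ≠ 0)
    (t : ℝ) : 0 < expWeightFunctional w0 t (q * q) := by
  have hnn : 0 ≤ fun x => (q * q).eval x * expWeight w0 t x := fun x => by
    simpa [eval_mul, expWeight] using
      mul_nonneg (mul_self_nonneg (q.eval x)) (mul_nonneg (exp_pos _).le (hpos x).le)
  rw [← integral_eval_mul_expWeight hint,
    integral_pos_iff_support_of_nonneg hnn (integrable_eval_mul_expWeight hint _ t),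
    pos_iff_ne_zero]
  intro hsupp
  have hroots : ∀ᵐ x, x ∉ {x | q.IsRoot x} :=
    measure_eq_zero_iff_ae_notMem.mp ((finite_setOfPred_isRoot hq).measure_zero _)
  obtain ⟨x, hroot, hx⟩ := (hroots.and (measure_eq_zero_iff_ae_notMem.mp hsupp)).exists
  refine hx (Function.mem_support.mpr ?_)
  simpa [eval_mul, expWeight] using
    (mul_pos (mul_self_pos.mpr hroot) (mul_pos (exp_pos (t * x ^ 2)) (hpos x))).ne'

theorem hasDerivAt_expWeightFunctional {p : ℝ → ℝ[X]} {p' : ℝ[X]} {t : ℝ} {N : ℕ}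
    (hp : HasCoeffDerivAt p p' t) (hN : ∀ s, (p s).natDegree ≤ N) :
    HasDerivAt (fun s => expWeightFunctional w0 s (p s))
      (expWeightFunctional w0 t p' + expWeightFunctional w0 t (X ^ 2 * p t)) t := by
  have hsum : (fun s => expWeightFunctional w0 s (p s)) =
      fun s => ∑ i ∈ Finset.range (N + 1), (p s).coeff i * expWeightMoment w0 s i :=
    funext fun s => expWeightFunctional_eq_sum (Nat.lt_succ_of_le (hN s)) s
  rw [hsum, expWeightFunctional_eq_sum (Nat.lt_succ_of_le (hp.natDegree_le hN)),
    expWeightFunctional_X_pow_mul (Nat.lt_succ_of_le (hN t)), ← Finset.sum_add_distrib]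
  exact HasDerivAt.fun_sum fun i _ => (hp i).mul (hasDerivAt_expWeightMoment hint t i)

end ExpWeight

structure MonicOrthogonalFamily (w0 : ℝ → ℝ) (P : ℝ → ℕ → ℝ[X]) (β : ℝ → ℕ → ℝ) : Prop where
  monic : ∀ t n, (P t n).Monic
  natDegree_eq : ∀ t n, (P t n).natDegree = n
  orthogonal : ∀ t j k, j ≠ k → expWeightFunctional w0 t (P t j * P t k) = 0
  zero : ∀ t, P t 0 = 1
  one : ∀ t, P t 1 = X
  beta_zero : ∀ t, β t 0 = 0
  recurrence : ∀ t n, 1 ≤ n → P t (n + 1) = X * P t n - C (β t n) * P t (n - 1)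

noncomputable def normSq (w0 : ℝ → ℝ) (P : ℝ → ℕ → ℝ[X]) (n : ℕ) (t : ℝ) : ℝ :=
  expWeightFunctional w0 t (P t n * P t n)

namespace MonicOrthogonalFamily

variable {w0 : ℝ → ℝ} {P : ℝ → ℕ → ℝ[X]} {β : ℝ → ℕ → ℝ}

theorem X_mul (hP : MonicOrthogonalFamily w0 P β) (t : ℝ) (n : ℕ) :
    X * P t n = P t (n + 1) + C (β t n) * P t (n - 1) := by
  rcases Nat.eq_zero_or_pos n with rfl | hn
  · simp [hP.zero, hP.one, hP.beta_zero]
  · rw [hP.recurrence t n hn]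
    ring

theorem functional_mul_eq_zero_of_degree_lt (hP : MonicOrthogonalFamily w0 P β) {t : ℝ}
    {n : ℕ} {r : ℝ[X]} (hr : r.degree < n) :
    expWeightFunctional w0 t (P t n * r) = 0 := by
  let S : Sequence ℝ :=
    ⟨P t, fun i => by rw [degree_eq_natDegree (hP.monic t i).ne_zero, hP.natDegree_eq]⟩
  have hspan : Submodule.span ℝ (S '' Set.Iio n) = degreeLT ℝ n :=
    S.span_degreeLT fun i _ => by simp [S, (hP.monic t i).leadingCoeff]
  have hker : degreeLT ℝ n ≤
      LinearMap.ker ((expWeightFunctional w0 t).comp (LinearMap.mulLeft ℝ (P t n))) := by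
    rw [← hspan, Submodule.span_le]
    rintro _ ⟨j, hj, rfl⟩
    exact hP.orthogonal t n j (ne_of_gt hj)
  exact hker (mem_degreeLT.mpr hr)

theorem beta_succ_mul_normSq (hP : MonicOrthogonalFamily w0 P β) (t : ℝ) (n : ℕ) :
    β t (n + 1) * normSq w0 P n t = normSq w0 P (n + 1) t := by
  set L := expWeightFunctional w0 t
  calc β t (n + 1) * normSq w0 P n t = L (X * P t (n + 1) * P t n) := by
        rw [hP.X_mul, add_mul, map_add, hP.orthogonal t _ _ (by omega), C_mul', smul_mul_assoc,
          map_smul, Nat.add_sub_cancel, zero_add, smul_eq_mul, normSq]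
    _ = L (P t (n + 1) * (X * P t n)) := by rw [mul_comm X, mul_assoc]
    _ = normSq w0 P (n + 1) t := by
        rw [hP.X_mul, mul_add, map_add, mul_left_comm, C_mul', map_smul,
          hP.orthogonal t (n + 1) (n - 1) (by omega), smul_zero, add_zero, normSq]

theorem functional_X_sq_mul_self (hP : MonicOrthogonalFamily w0 P β) (t : ℝ) (n : ℕ) :
    expWeightFunctional w0 t (X ^ 2 * (P t n * P t n)) =
      (β t (n + 1) + β t n) * normSq w0 P n t := by
  set L := expWeightFunctional w0 t
  have hsq : X ^ 2 * (P t n * P t n) = P t (n + 1) * P t (n + 1) +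
      (2 * β t n) • (P t (n + 1) * P t (n - 1)) + β t n ^ 2 • (P t (n - 1) * P t (n - 1)) := by
    rw [show X ^ 2 * (P t n * P t n) = (X * P t n) * (X * P t n) by ring, hP.X_mul,
      C_mul']
    simp only [smul_eq_C_mul, C_mul, C_pow, C_ofNat]
    ring
  have hlow : β t n ^ 2 * normSq w0 P (n - 1) t = β t n * normSq w0 P n t := by
    rcases n with _ | m
    · simp [hP.beta_zero]
    · rw [Nat.add_sub_cancel, ← hP.beta_succ_mul_normSq]
      ring
  rw [hsq, map_add, map_add, map_smul, map_smul, hP.orthogonal t (n + 1) (n - 1) (by omega),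
    smul_zero, add_zero, smul_eq_mul, ← normSq, ← normSq, hlow, ← hP.beta_succ_mul_normSq]
  ring

theorem normSq_pos (hP : MonicOrthogonalFamily w0 P β) (hpos : ∀ x, 0 < w0 x)
    (hint : ∀ (t : ℝ) (k : ℕ), Integrable (fun x => x ^ k * expWeight w0 t x)) (n : ℕ) (t : ℝ) :
    0 < normSq w0 P n t :=
  expWeightFunctional_mul_self_pos hint hpos (hP.monic t n).ne_zero t

theorem beta_succ_eq_div (hP : MonicOrthogonalFamily w0 P β) (hpos : ∀ x, 0 < w0 x)
    (hint : ∀ (t : ℝ) (k : ℕ), Integrable (fun x => x ^ k * expWeight w0 t x)) (n : ℕ) :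
    (fun t => β t (n + 1)) = fun t => normSq w0 P (n + 1) t / normSq w0 P n t :=
  funext fun t =>
    eq_div_of_mul_eq (hP.normSq_pos hpos hint n t).ne' (hP.beta_succ_mul_normSq t n)

theorem hasDerivAt_normSq_of_hasCoeffDerivAt (hP : MonicOrthogonalFamily w0 P β)
    (hint : ∀ (t : ℝ) (k : ℕ), Integrable (fun x => x ^ k * expWeight w0 t x)) {n : ℕ} {t : ℝ}
    {p' : ℝ[X]} (hp : HasCoeffDerivAt (fun s => P s n) p' t) :
    HasDerivAt (normSq w0 P n) (expWeightFunctional w0 t (X ^ 2 * (P t n * P t n))) t := by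
  have hdeg : ∀ s, (P s n * P s n).natDegree ≤ n + n := fun s =>
    natDegree_mul_le.trans (by rw [hP.natDegree_eq])
  have hp' : expWeightFunctional w0 t (P t n * p') = 0 :=
    hP.functional_mul_eq_zero_of_degree_lt
      (hp.degree_lt_of_monic (hP.monic · n) (hP.natDegree_eq · n))
  have h := hasDerivAt_expWeightFunctional hint (hp.mul hp) hdeg
  rwa [map_add, mul_comm p', hp', add_zero, zero_add] at h

theorem exists_hasCoeffDerivAt (hP : MonicOrthogonalFamily w0 P β) (hpos : ∀ x, 0 < w0 x)
    (hint : ∀ (t : ℝ) (k : ℕ), Integrable (fun x => x ^ k * expWeight w0 t x)) (n : ℕ) (t : ℝ) :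
    ∃ p', HasCoeffDerivAt (fun s => P s n) p' t := by
  induction n using Nat.twoStepInduction with
  | zero => exact ⟨0, by simpa only [hP.zero] using HasCoeffDerivAt.const 1 t⟩
  | one => exact ⟨0, by simpa only [hP.one] using HasCoeffDerivAt.const X t⟩
  | more n ih₀ ih₁ =>
    obtain ⟨p₀, hp₀⟩ := ih₀
    obtain ⟨p₁, hp₁⟩ := ih₁
    obtain ⟨β', hβ⟩ : ∃ β', HasDerivAt (fun s => β s (n + 1)) β' t := by
      rw [hP.beta_succ_eq_div hpos hint]
      exact ⟨_, (hP.hasDerivAt_normSq_of_hasCoeffDerivAt hint hp₁).div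
        (hP.hasDerivAt_normSq_of_hasCoeffDerivAt hint hp₀) (hP.normSq_pos hpos hint n t).ne'⟩
    have hrec : (fun s => P s (n + 2)) = fun s => X * P s (n + 1) - C (β s (n + 1)) * P s n :=
      funext fun s => hP.recurrence s (n + 1) (by omega)
    exact ⟨_, hrec ▸ ((HasCoeffDerivAt.const X t).mul hp₁).sub ((HasCoeffDerivAt.C hβ).mul hp₀)⟩

theorem hasDerivAt_normSq (hP : MonicOrthogonalFamily w0 P β) (hpos : ∀ x, 0 < w0 x)
    (hint : ∀ (t : ℝ) (k : ℕ), Integrable (fun x => x ^ k * expWeight w0 t x)) (n : ℕ) (t : ℝ) :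
    HasDerivAt (normSq w0 P n) ((β t (n + 1) + β t n) * normSq w0 P n t) t := by
  obtain ⟨p', hp⟩ := hP.exists_hasCoeffDerivAt hpos hint n t
  rw [← hP.functional_X_sq_mul_self]
  exact hP.hasDerivAt_normSq_of_hasCoeffDerivAt hint hp

end MonicOrthogonalFamily

theorem volterra_lattice_general (w0 : ℝ → ℝ) (hpos : ∀ x, 0 < w0 x)
    (hint : ∀ (t : ℝ) (k : ℕ), Integrable (fun x : ℝ => x ^ k * (Real.exp (t * x ^ 2) * w0 x)))
    (P : ℝ → ℕ → Polynomial ℝ) (β : ℝ → ℕ → ℝ)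
    (hmonic : ∀ t n, (P t n).Monic) (hdeg : ∀ t n, (P t n).natDegree = n)
    (horth : ∀ t, ∀ j k, j ≠ k →
      ∫ x : ℝ, (P t j).eval x * (P t k).eval x * (Real.exp (t * x ^ 2) * w0 x) = 0)
    (hβ0 : ∀ t, β t 0 = 0)
    (hP0 : ∀ t, P t 0 = 1) (hP1 : ∀ t, P t 1 = X)
    (hrec : ∀ t n, 1 ≤ n → P t (n + 1) = X * P t n - C (β t n) * P t (n - 1)) :
    ∀ (n : ℕ), 1 ≤ n → ∀ t : ℝ,
      HasDerivAt (fun s => β s n) (β t n * (β t (n + 1) - β t (n - 1))) t := by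
  have hP : MonicOrthogonalFamily w0 P β := ⟨hmonic, hdeg, fun t j k hjk => by
    rw [← integral_eval_mul_expWeight hint]
    simp only [eval_mul]
    exact horth t j k hjk, hP0, hP1, hβ0, hrec⟩
  rintro n hn t
  obtain ⟨m, rfl⟩ : ∃ m, n = m + 1 := ⟨n - 1, by omega⟩
  have hnorm := hP.normSq_pos hpos hint m t
  rw [hP.beta_succ_eq_div hpos hint]
  refine ((hP.hasDerivAt_normSq hpos hint (m + 1) t).div (hP.hasDerivAt_normSq hpos hint m t)
    hnorm.ne').congr_deriv ?_
  rw [Nat.add_sub_cancel, ← hP.beta_succ_mul_normSq]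
  field_simp
  ring

/-- Let `ω₀` be a positive, even weight on `ℝ` all of whose moments exist,
and let `ω(x;t) = exp(t x²) ω₀(x)` have all moments finite. Then the recurrence coefficients
`β_n(t)` of the monic polynomials orthogonal with respect to `ω(·;t)` satisfy the Volterra
(Langmuir lattice) equation `dβ_n/dt = β_n (β_{n+1} − β_{n−1})` for all `n ≥ 1`. -/
theorem volterra_lattice (w0 : ℝ → ℝ) (hpos : ∀ x, 0 < w0 x) (heven : ∀ x, w0 (-x) = w0 x)
    (hint : ∀ (t : ℝ) (k : ℕ), Integrable (fun x : ℝ => x ^ k * (Real.exp (t * x ^ 2) * w0 x)))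
    (P : ℝ → ℕ → Polynomial ℝ) (β : ℝ → ℕ → ℝ)
    (hmonic : ∀ t n, (P t n).Monic) (hdeg : ∀ t n, (P t n).natDegree = n)
    (horth : ∀ t, ∀ j k, j ≠ k →
      ∫ x : ℝ, (P t j).eval x * (P t k).eval x * (Real.exp (t * x ^ 2) * w0 x) = 0)
    (hβ0 : ∀ t, β t 0 = 0) (hβpos : ∀ t n, 1 ≤ n → 0 < β t n)
    (hP0 : ∀ t, P t 0 = 1) (hP1 : ∀ t, P t 1 = X)
    (hrec : ∀ t n, 1 ≤ n → P t (n + 1) = X * P t n - C (β t n) * P t (n - 1)) :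
    ∀ (n : ℕ), 1 ≤ n → ∀ t : ℝ,
      HasDerivAt (fun s => β s n) (β t n * (β t (n + 1) - β t (n - 1))) t :=
  volterra_lattice_general w0 hpos hint P β hmonic hdeg horth hβ0 hP0 hP1 hrec
end
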